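/- Fix s ∈ [−1,1] and μ ∈ {x,y,z}. For every 2×2 complex matrix ρ, the one-qubit moment generating function in the direction μ, g(t) = ∫₀^{2π}∫₀^π Tr[ρ Δ^{(s)}(θ,φ)] · exp( t·n_μ(θ,φ) ) sinθ dθ dφ, is differentiable at t = 0 with g'(0) = (3^{(1+s)/2}/3)·Tr(ρ σ_μ); equivalently Tr(ρσ_μ) = (3/λ(s))·g'(0) with λ(s) = 3^{(1+s)/2}. -/

import Mathlib

open Matrix Complex Real MeasureTheory

noncomputable section

/-- The spin coherent state |θ,φ⟩ = cos(θ/2)|0⟩ + e^{iφ} sin(θ/2)|1⟩. -/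
def cohVec (θ φ : ℝ) : Fin 2 → ℂ :=
  ![((Real.cos (θ / 2) : ℝ) : ℂ),
    Complex.exp (Complex.I * (φ : ℂ)) * ((Real.sin (θ / 2) : ℝ) : ℂ)]

/-- λ(s) = 3^{(1+s)/2}. -/
def lam (s : ℝ) : ℝ := (3 : ℝ) ^ ((1 + s) / 2)

/-- The s-parametrized Stratonovich–Weyl kernel
Δ^{(s)}(θ,φ) = (1/(2π))·( λ(s) |θ,φ⟩⟨θ,φ| − ((λ(s) − 1)/2)·I₂ ). -/
def swKernel (s θ φ : ℝ) : Matrix (Fin 2) (Fin 2) ℂ :=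
  ((1 / (2 * Real.pi) : ℝ) : ℂ) •
    (((lam s : ℝ) : ℂ) • Matrix.of (fun k l => cohVec θ φ k * (starRingEnd ℂ) (cohVec θ φ l))
      - (((lam s - 1) / 2 : ℝ) : ℂ) • (1 : Matrix (Fin 2) (Fin 2) ℂ))

def σx : Matrix (Fin 2) (Fin 2) ℂ := !![0, 1; 1, 0]
def σy : Matrix (Fin 2) (Fin 2) ℂ := !![0, -Complex.I; Complex.I, 0]
def σz : Matrix (Fin 2) (Fin 2) ℂ := !![1, 0; 0, -1]

/-- The Pauli matrices indexed by the directions x, y, z. -/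
def pauli3 : Fin 3 → Matrix (Fin 2) (Fin 2) ℂ := ![σx, σy, σz]

/-- The components of the Bloch vector field n(θ,φ) = (sinθcosφ, sinθsinφ, cosθ). -/
def blochComp : Fin 3 → ℝ → ℝ → ℝ :=
  ![fun θ φ => Real.sin θ * Real.cos φ,
    fun θ φ => Real.sin θ * Real.sin φ,
    fun θ _ => Real.cos θ]

/-!
By the Bloch decomposition `|θ,φ⟩⟨θ,φ| = (1 + n·σ)/2`, the symbol of `ρ` is
`Tr[ρ Δ^{(s)}] = (Tr ρ + λ(s) ∑_ν n_ν Tr(ρ σ_ν)) / (4π)`. Since `n` is bounded, the moment generating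
function may be differentiated under the integral sign, so `g'(0)` is the first moment
`∫ Tr[ρ Δ^{(s)}] n_μ dΩ`. The moments of the sphere, `∫ n_μ dΩ = 0` and `∫ n_ν n_μ dΩ = (4π/3) δ_νμ`,
then leave `(λ(s)/3) Tr(ρ σ_μ)`.
-/

open Set

theorem intervalIntegral_intervalIntegral_eq_setIntegral_prod {E : Type*} [NormedAddCommGroup E]
    [NormedSpace ℝ E] {f : ℝ × ℝ → E} {a b c d : ℝ} (hab : a ≤ b) (hcd : c ≤ d)
    (hf : ContinuousOn f (Icc a b ×ˢ Icc c d)) :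
    ∫ y in c..d, ∫ x in a..b, f (x, y) = ∫ p in Icc a b ×ˢ Icc c d, f p := by
  have hswap : IntegrableOn (fun q : ℝ × ℝ => f q.swap) (Icc c d ×ˢ Icc a b) :=
    (hf.comp continuous_swap.continuousOn fun q hq => ⟨hq.2, hq.1⟩).integrableOn_compact
      (isCompact_Icc.prod isCompact_Icc)
  rw [Measure.volume_eq_prod, ← setIntegral_prod_swap, setIntegral_prod _ hswap,
    intervalIntegral.integral_of_le hcd, ← integral_Icc_eq_integral_Ioc]
  refine setIntegral_congr_fun measurableSet_Icc fun y _ => ?_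
  rw [intervalIntegral.integral_of_le hab, ← integral_Icc_eq_integral_Ioc]
  rfl

theorem hasDerivAt_integral_mul_exp {α : Type*} [MeasurableSpace α] {ν : Measure α}
    {w : α → ℂ} {n : α → ℝ} {M : ℝ} (hw : Integrable w ν) (hn : AEStronglyMeasurable n ν)
    (hM : ∀ᵐ x ∂ν, |n x| ≤ M) (t₀ : ℝ) :
    HasDerivAt (fun t : ℝ => ∫ x, w x * (Real.exp (t * n x) : ℂ) ∂ν)
      (∫ x, w x * n x * (Real.exp (t₀ * n x) : ℂ) ∂ν) t₀ := by
  have hexp_meas (t : ℝ) : AEStronglyMeasurable (fun x => (Real.exp (t * n x) : ℂ)) ν :=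
    (Complex.continuous_ofReal.comp Real.continuous_exp).comp_aestronglyMeasurable
      (hn.const_mul t)
  have hexp_le : ∀ᵐ x ∂ν, ∀ t, ‖(Real.exp (t * n x) : ℂ)‖ ≤ Real.exp (|t| * M) := by
    filter_upwards [hM] with x hx t
    rw [Complex.norm_real, Real.norm_of_nonneg (Real.exp_pos _).le, Real.exp_le_exp]
    calc t * n x ≤ |t| * |n x| := by rw [← abs_mul]; exact le_abs_self _
      _ ≤ |t| * M := by gcongr
  have hderiv_le : ∀ᵐ x ∂ν, ∀ t ∈ Metric.ball t₀ 1,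
      ‖w x * n x * (Real.exp (t * n x) : ℂ)‖ ≤ ‖w x‖ * (M * Real.exp ((|t₀| + 1) * M)) := by
    filter_upwards [hM, hexp_le] with x hx hx_exp t ht
    have ht' : |t| ≤ |t₀| + 1 := by
      have := abs_sub_abs_le_abs_sub t t₀
      rw [Metric.mem_ball, Real.dist_eq] at ht
      linarith
    have hM₀ : 0 ≤ M := (abs_nonneg _).trans hx
    rw [norm_mul, norm_mul, Complex.norm_real, Real.norm_eq_abs, mul_assoc]
    refine mul_le_mul_of_nonneg_left (mul_le_mul hx ((hx_exp t).trans ?_) (norm_nonneg _) hM₀)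
      (norm_nonneg _)
    exact Real.exp_le_exp.2 (mul_le_mul_of_nonneg_right ht' hM₀)
  refine (hasDerivAt_integral_of_dominated_loc_of_deriv_le
    (F := fun t x => w x * (Real.exp (t * n x) : ℂ)) (Metric.ball_mem_nhds t₀ one_pos)
    (.of_forall fun t => hw.aestronglyMeasurable.mul (hexp_meas t))
    (hw.mul_bdd (hexp_meas t₀) (hexp_le.mono fun x hx => hx t₀))
    ((hw.aestronglyMeasurable.mul (Complex.continuous_ofReal.comp_aestronglyMeasurable hn)).mul
      (hexp_meas t₀))
    hderiv_le (hw.norm.mul_const _) (.of_forall fun x t _ => ?_)).2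
  refine (((hasDerivAt_mul_const (n x)).exp.ofReal_comp).const_mul (w x)).congr_deriv ?_
  push_cast; ring

theorem cohVec_projector_eq (θ φ : ℝ) :
    Matrix.of (fun k l => cohVec θ φ k * (starRingEnd ℂ) (cohVec θ φ l)) =
      (1 / 2 : ℂ) • (1 + ∑ ν, ((blochComp ν θ φ : ℝ) : ℂ) • pauli3 ν) := by
  have hcos : (Real.cos (θ / 2) : ℂ) ^ 2 = (1 + Real.cos θ) / 2 := by
    norm_cast; rw [Real.cos_sq, mul_div_cancel₀ _ two_ne_zero]; ring
  have hsin : (Real.sin (θ / 2) : ℂ) ^ 2 = (1 - Real.cos θ) / 2 := by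
    have hpyth : (Real.sin (θ / 2) : ℂ) ^ 2 + (Real.cos (θ / 2) : ℂ) ^ 2 = 1 := by
      exact_mod_cast Real.sin_sq_add_cos_sq _
    linear_combination hpyth - hcos
  have hsc : (Real.sin (θ / 2) : ℂ) * Real.cos (θ / 2) = Real.sin θ / 2 := by
    have hdouble := Real.sin_two_mul (θ / 2)
    rw [mul_div_cancel₀ _ two_ne_zero] at hdouble
    norm_cast; linarith
  have hφ : (Real.cos φ : ℂ) ^ 2 + (Real.sin φ : ℂ) ^ 2 = 1 := by
    exact_mod_cast Real.cos_sq_add_sin_sq φ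
  have hphase : Complex.exp (Complex.I * φ) = Real.cos φ + Real.sin φ * Complex.I := by
    rw [mul_comm, Complex.exp_mul_I]; push_cast; ring
  ext i j
  fin_cases i <;> fin_cases j <;>
    simp only [cohVec, hphase, Fin.zero_eta, Fin.isValue, Fin.mk_one, of_apply, cons_val_zero,
      cons_val_one, cons_val_fin_one, map_mul, map_add, conj_ofReal, conj_I, mul_neg, one_div,
      blochComp, cons_val', pauli3, σx, σy, σz, coe_smul, Fin.sum_univ_three, smul_of, smul_cons,
      smul_zero, real_smul, ofReal_mul, mul_one, Matrix.smul_empty, smul_neg, of_add_of, add_cons,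
      head_cons, add_zero, tail_cons, empty_add_empty, cons_val, zero_add, Matrix.smul_apply,
      Matrix.add_apply, one_apply_eq, Nat.reduceAdd, ne_eq, zero_ne_one, one_ne_zero,
      not_false_eq_true, one_apply_ne, smul_eq_mul]
  · linear_combination hcos
  · linear_combination (Real.cos φ - Real.sin φ * Complex.I) * hsc
  · linear_combination (Real.cos φ + Real.sin φ * Complex.I) * hsc
  · linear_combination (Real.sin (θ / 2) : ℂ) ^ 2 * hφ + hsin
      - (Real.sin φ : ℂ) ^ 2 * (Real.sin (θ / 2) : ℂ) ^ 2 * Complex.I_sq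

theorem swKernel_eq (s θ φ : ℝ) :
    swKernel s θ φ = ((1 / (4 * π) : ℝ) : ℂ) •
      (1 + (lam s : ℂ) • ∑ ν, ((blochComp ν θ φ : ℝ) : ℂ) • pauli3 ν) := by
  rw [swKernel, cohVec_projector_eq]
  push_cast
  module

theorem trace_mul_swKernel (s θ φ : ℝ) (ρ : Matrix (Fin 2) (Fin 2) ℂ) :
    trace (ρ * swKernel s θ φ) = ((1 / (4 * π) : ℝ) : ℂ) *
      (trace ρ + lam s * ∑ ν, blochComp ν θ φ * trace (ρ * pauli3 ν)) := by
  simp [swKernel_eq, Matrix.mul_sum, trace_sum, mul_add]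

def blochPolar : Fin 3 → ℝ → ℝ := ![Real.sin, Real.sin, Real.cos]

def blochAzimuthal : Fin 3 → ℝ → ℝ := ![Real.cos, Real.sin, 1]

theorem blochComp_eq_mul (ν : Fin 3) (θ φ : ℝ) :
    blochComp ν θ φ = blochPolar ν θ * blochAzimuthal ν φ := by
  fin_cases ν <;> simp [blochComp, blochPolar, blochAzimuthal]

theorem continuous_blochComp (ν : Fin 3) : Continuous fun p : ℝ × ℝ => blochComp ν p.1 p.2 := by
  fin_cases ν <;>
    simp only [blochComp, Fin.zero_eta, Fin.mk_one, Fin.reduceFinMk, Fin.isValue, cons_val',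
      cons_val_fin_one, cons_val_zero, cons_val_one, cons_val] <;>
    fun_prop

theorem continuous_trace_mul_swKernel (s : ℝ) (ρ : Matrix (Fin 2) (Fin 2) ℂ) :
    Continuous fun p : ℝ × ℝ => trace (ρ * swKernel s p.1 p.2) := by
  simp only [trace_mul_swKernel]
  have hn := continuous_blochComp
  fun_prop

theorem abs_blochComp_le_one (ν : Fin 3) (θ φ : ℝ) : |blochComp ν θ φ| ≤ 1 := by
  have hpolar : |blochPolar ν θ| ≤ 1 := by
    fin_cases ν <;> simp [blochPolar, abs_sin_le_one, abs_cos_le_one]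
  have hazimuthal : |blochAzimuthal ν φ| ≤ 1 := by
    fin_cases ν <;> simp [blochAzimuthal, abs_sin_le_one, abs_cos_le_one]
  rw [blochComp_eq_mul, abs_mul]
  exact mul_le_one₀ hpolar (abs_nonneg _) hazimuthal

def sphereCoords : Set (ℝ × ℝ) := Icc 0 π ×ˢ Icc 0 (2 * π)

theorem isCompact_sphereCoords : IsCompact sphereCoords :=
  isCompact_Icc.prod isCompact_Icc

theorem setIntegral_sphereCoords_mul (f g : ℝ → ℝ) :
    ∫ p in sphereCoords, f p.1 * g p.2 = (∫ θ in 0..π, f θ) * ∫ φ in 0..2 * π, g φ := by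
  rw [sphereCoords, Measure.volume_eq_prod, setIntegral_prod_mul, integral_Icc_eq_integral_Ioc,
    integral_Icc_eq_integral_Ioc, ← intervalIntegral.integral_of_le pi_pos.le,
    ← intervalIntegral.integral_of_le (by positivity)]

theorem setIntegral_sphereCoords_blochComp (μ : Fin 3) :
    ∫ p in sphereCoords, blochComp μ p.1 p.2 * Real.sin p.1 = 0 := by
  have hfactor (θ φ : ℝ) : blochComp μ θ φ * Real.sin θ =
      blochPolar μ θ * Real.sin θ * blochAzimuthal μ φ := by
    rw [blochComp_eq_mul]; ring
  simp_rw [hfactor]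
  rw [setIntegral_sphereCoords_mul (fun θ => blochPolar μ θ * Real.sin θ)]
  have hcos_sin : ∫ θ in 0..π, Real.cos θ * Real.sin θ = 0 := by
    simp_rw [mul_comm (Real.cos _), integral_sin_mul_cos₁]; simp
  fin_cases μ <;> simp [blochPolar, blochAzimuthal, hcos_sin]

theorem setIntegral_sphereCoords_blochComp_mul (ν μ : Fin 3) :
    ∫ p in sphereCoords, blochComp ν p.1 p.2 * blochComp μ p.1 p.2 * Real.sin p.1 =
      if ν = μ then 4 * π / 3 else 0 := by
  have hfactor (θ φ : ℝ) : blochComp ν θ φ * blochComp μ θ φ * Real.sin θ =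
      blochPolar ν θ * blochPolar μ θ * Real.sin θ * (blochAzimuthal ν φ * blochAzimuthal μ φ) := by
    rw [blochComp_eq_mul, blochComp_eq_mul]; ring
  simp_rw [hfactor]
  rw [setIntegral_sphereCoords_mul (fun θ => blochPolar ν θ * blochPolar μ θ * Real.sin θ)
    (fun φ => blochAzimuthal ν φ * blochAzimuthal μ φ)]
  have hsin_cube : ∫ θ in 0..π, Real.sin θ * Real.sin θ * Real.sin θ = 4 / 3 := by
    simp_rw [← pow_two, ← pow_succ, integral_sin_pow_three]; norm_num
  have hcos_sq_sin : ∫ θ in 0..π, Real.cos θ * Real.cos θ * Real.sin θ = 2 / 3 := by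
    simp_rw [← pow_two, mul_comm _ (Real.sin _), integral_sin_mul_cos_sq]; norm_num
  have hcos_sq : ∫ φ in 0..2 * π, Real.cos φ * Real.cos φ = π := by
    simp_rw [← pow_two, integral_cos_sq]; simp
  have hsin_sq : ∫ φ in 0..2 * π, Real.sin φ * Real.sin φ = π := by
    simp_rw [← pow_two, integral_sin_sq]; simp
  have hcos_sin : ∫ φ in 0..2 * π, Real.cos φ * Real.sin φ = 0 := by
    simp_rw [mul_comm (Real.cos _), integral_sin_mul_cos₁]; simp
  fin_cases ν <;> fin_cases μ <;>
    simp [blochPolar, blochAzimuthal, hsin_cube, hcos_sq_sin, hcos_sq, hsin_sq, hcos_sin] <;> ring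

theorem setIntegral_sphereCoords_trace_mul_swKernel (s : ℝ) (μ : Fin 3)
    (ρ : Matrix (Fin 2) (Fin 2) ℂ) :
    ∫ p in sphereCoords, trace (ρ * swKernel s p.1 p.2) * Real.sin p.1 * blochComp μ p.1 p.2 =
      (lam s / 3 : ℝ) * trace (ρ * pauli3 μ) := by
  set c : ℂ := ((1 / (4 * π) : ℝ) : ℂ)
  have hexpand (p : ℝ × ℝ) :
      trace (ρ * swKernel s p.1 p.2) * Real.sin p.1 * blochComp μ p.1 p.2 =
        c * trace ρ * ((blochComp μ p.1 p.2 * Real.sin p.1 : ℝ) : ℂ) +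
          ∑ ν, c * lam s * trace (ρ * pauli3 ν) *
            ((blochComp ν p.1 p.2 * blochComp μ p.1 p.2 * Real.sin p.1 : ℝ) : ℂ) := by
    rw [trace_mul_swKernel]
    simp only [mul_add, add_mul, Finset.mul_sum, Finset.sum_mul, Complex.ofReal_mul]
    congr 1
    · ring
    · exact Finset.sum_congr rfl fun ν _ => by ring
  have hintegrable (f : ℝ × ℝ → ℝ) (hf : Continuous f) (a : ℂ) :
      IntegrableOn (fun p => a * (f p : ℂ)) sphereCoords :=
    (continuous_const.mul (Complex.continuous_ofReal.comp hf)).continuousOn.integrableOn_compact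
      isCompact_sphereCoords
  have hn := continuous_blochComp
  simp_rw [hexpand]
  rw [integral_add (hintegrable _ (by fun_prop) _)
      (integrable_finsetSum _ fun ν _ => hintegrable _ (by fun_prop) _),
    integral_finsetSum _ fun ν _ => hintegrable _ (by fun_prop) _]
  simp_rw [integral_const_mul, integral_complex_ofReal, setIntegral_sphereCoords_blochComp,
    setIntegral_sphereCoords_blochComp_mul]
  rw [Complex.ofReal_zero, mul_zero, zero_add,
    Finset.sum_eq_single μ (fun ν _ hν => by simp [hν]) (by simp), if_pos rfl]
  simp only [c]
  push_cast
  field_simp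

theorem one_qubit_mgf_first_moment_general (s : ℝ)
    (μ : Fin 3) (ρ : Matrix (Fin 2) (Fin 2) ℂ) :
    HasDerivAt
      (fun t : ℝ =>
        ∫ φ in (0:ℝ)..(2 * Real.pi), ∫ θ in (0:ℝ)..Real.pi,
          Matrix.trace (ρ * swKernel s θ φ)
            * ((Real.exp (t * blochComp μ θ φ) : ℝ) : ℂ)
            * ((Real.sin θ : ℝ) : ℂ))
      (((lam s / 3 : ℝ) : ℂ) * Matrix.trace (ρ * pauli3 μ)) 0 := by
  have hC := continuous_trace_mul_swKernel s ρ
  have hn := continuous_blochComp μ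
  have hg : (fun t : ℝ => ∫ φ in (0:ℝ)..(2 * π), ∫ θ in (0:ℝ)..π,
      trace (ρ * swKernel s θ φ) * ((Real.exp (t * blochComp μ θ φ) : ℝ) : ℂ) *
        ((Real.sin θ : ℝ) : ℂ)) =
      fun t => ∫ p in sphereCoords, trace (ρ * swKernel s p.1 p.2) * Real.sin p.1 *
        ((Real.exp (t * blochComp μ p.1 p.2) : ℝ) : ℂ) := by
    funext t
    rw [sphereCoords, intervalIntegral_intervalIntegral_eq_setIntegral_prod
      (f := fun p : ℝ × ℝ => trace (ρ * swKernel s p.1 p.2) *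
        ((Real.exp (t * blochComp μ p.1 p.2) : ℝ) : ℂ) * ((Real.sin p.1 : ℝ) : ℂ))
      pi_pos.le (by positivity) (Continuous.continuousOn (by fun_prop))]
    simp_rw [mul_right_comm _ ((Real.exp _ : ℝ) : ℂ)]
  have hw : Continuous fun p : ℝ × ℝ => trace (ρ * swKernel s p.1 p.2) * Real.sin p.1 := by
    fun_prop
  rw [hg]
  refine (hasDerivAt_integral_mul_exp (ν := volume.restrict sphereCoords)
    (hw.continuousOn.integrableOn_compact isCompact_sphereCoords) hn.aestronglyMeasurable
    (ae_of_all _ fun p => abs_blochComp_le_one μ p.1 p.2) 0).congr_deriv ?_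
  simp only [zero_mul, Real.exp_zero, Complex.ofReal_one, mul_one]
  exact setIntegral_sphereCoords_trace_mul_swKernel s μ ρ

/-- the one-qubit moment generating function
g(t) = ∫ Tr[ρΔ^{(s)}] e^{t·n_μ} sinθ dθ dφ is differentiable at t = 0 with
g'(0) = (λ(s)/3)·Tr(ρσ_μ). -/
theorem one_qubit_mgf_first_moment (s : ℝ) (hs : s ∈ Set.Icc (-1 : ℝ) 1)
    (μ : Fin 3) (ρ : Matrix (Fin 2) (Fin 2) ℂ) :
    HasDerivAt
      (fun t : ℝ =>
        ∫ φ in (0:ℝ)..(2 * Real.pi), ∫ θ in (0:ℝ)..Real.pi,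
          Matrix.trace (ρ * swKernel s θ φ)
            * ((Real.exp (t * blochComp μ θ φ) : ℝ) : ℂ)
            * ((Real.sin θ : ℝ) : ℂ))
      (((lam s / 3 : ℝ) : ℂ) * Matrix.trace (ρ * pauli3 μ)) 0 :=
  one_qubit_mgf_first_moment_general s μ ρ
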